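/- Let G = (V, E_1, …, E_N) be an infinite, locally finite, connected edge-coloured graph with N colours, and fix p ∈ [0,1]^{N−1} and q ∈ [0,1]. Let x ∈ V, let S ⊆ V be finite with x ∈ S, let A ⊆ V be finite with A \ S ≠ ∅, and let u ∈ A \ S. Then P_{p,q}(x ↔_A u) ≤ Σ_{i=1}^{N} Σ_{{y,z} ∈ ΔS ∩ E_i, y∈S, z∉S} p_i · P_{p,q}(x ↔_S y) · P_{p,q}(z ↔_A u), where p_N = q. -/

import Mathlib

open MeasureTheory ENNReal Set
open scoped Classical

namespace InhomPerc

variable {V : Type*} {N : ℕ}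

/-- The edge set of an edge-coloured graph: the union of all colour classes. -/
def Eset (E : Fin N → Set (Sym2 V)) : Set (Sym2 V) := ⋃ i, E i

/-- The colour classes are mutually disjoint. -/
def DisjointColours (E : Fin N → Set (Sym2 V)) : Prop :=
  ∀ i j : Fin N, i ≠ j → Disjoint (E i) (E j)

/-- Every edge is a pair of two *distinct* vertices. -/
def NoLoops (E : Fin N → Set (Sym2 V)) : Prop := ∀ e ∈ Eset E, ¬ e.IsDiag

/-- The underlying simple graph of the edge-coloured graph. -/
def graph (E : Fin N → Set (Sym2 V)) : SimpleGraph V where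
  Adj u v := u ≠ v ∧ s(u, v) ∈ Eset E
  symm := ⟨by
    intro u v h
    refine ⟨h.1.symm, ?_⟩
    rw [Sym2.eq_swap]
    exact h.2⟩
  loopless := ⟨fun v h => h.1 rfl⟩

/-- Local finiteness: every vertex lies in finitely many edges. -/
def LocFin (E : Fin N → Set (Sym2 V)) : Prop :=
  ∀ v : V, {e ∈ Eset E | v ∈ e}.Finite

/-- Connectivity of the edge-coloured graph. -/
def ConnectedGraph (E : Fin N → Set (Sym2 V)) : Prop := (graph E).Connected

/-- Quasi-transitivity: the vertices can be partitioned into finitely many classes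
such that vertices in the same class are related by a coloured graph automorphism. -/
def QuasiTransitive (E : Fin N → Set (Sym2 V)) : Prop :=
  ∃ (k : ℕ) (c : V → Fin k), ∀ u v : V, c u = c v →
    ∃ f : V ≃ V, (∀ (i : Fin N) (e : Sym2 V), e ∈ E i ↔ e.map f ∈ E i) ∧ f v = u

/-- Graph distance. -/
noncomputable def dist (E : Fin N → Set (Sym2 V)) (u v : V) : ℕ := (graph E).dist u v

/-- Percolation configurations: each (potential) edge is open (`true`) or closed. -/
abbrev Config (V : Type*) := Sym2 V → Bool

/-- `x` is joined to `y` by a path of open edges all of whose endpoints lie in `S`. -/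
def ConnIn (E : Fin N → Set (Sym2 V)) (ω : Config V) (S : Set V) (x y : V) : Prop :=
  Relation.ReflTransGen
    (fun a b => a ∈ S ∧ b ∈ S ∧ s(a, b) ∈ Eset E ∧ ω s(a, b) = true) x y

/-- The open cluster of `x`. -/
def cluster (E : Fin N → Set (Sym2 V)) (ω : Config V) (x : V) : Set V :=
  {y | ConnIn E ω Set.univ x y}

/-- The retention probability of an edge `e` under the parameter vector `r`:
`r i` for an edge of colour `i`, `0` for non-edges (by disjointness at most one
summand is nonzero). -/
noncomputable def edgeProb (E : Fin N → Set (Sym2 V)) (r : Fin N → ℝ) (e : Sym2 V) : ℝ :=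
  ∑ i : Fin N, if e ∈ E i then r i else 0

/-- `P` is the family of inhomogeneous percolation (product) measures: for each valid
parameter vector `r` it is a probability measure whose cylinder probabilities are the
products of the individual edge-retention probabilities. -/
def IsPercFamily (E : Fin N → Set (Sym2 V)) (P : (Fin N → ℝ) → Measure (Config V)) : Prop :=
  ∀ r : Fin N → ℝ, (∀ i, r i ∈ Icc (0 : ℝ) 1) →
    IsProbabilityMeasure (P r) ∧
    ∀ (F : Finset (Sym2 V)) (σ : Sym2 V → Bool),
      P r {ω | ∀ e ∈ F, ω e = σ e} =
        ∏ e ∈ F, ENNReal.ofReal (if σ e then edgeProb E r e else 1 - edgeProb E r e)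

/-- The full parameter vector `(p₁, …, p_{N-1}, q)`. -/
noncomputable def pFull (N : ℕ) (p : Fin (N - 1) → ℝ) (q : ℝ) : Fin N → ℝ :=
  fun i => if h : (i : ℕ) < N - 1 then p ⟨i, h⟩ else q

/-- The percolation function `θ`. -/
noncomputable def theta (E : Fin N → Set (Sym2 V)) (P : (Fin N → ℝ) → Measure (Config V))
    (r : Fin N → ℝ) : ℝ≥0∞ :=
  ⨆ x : V, P r {ω | (cluster E ω x).Infinite}

/-- The susceptibility `χ`. -/
noncomputable def chi (E : Fin N → Set (Sym2 V)) (P : (Fin N → ℝ) → Measure (Config V))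
    (r : Fin N → ℝ) : ℝ≥0∞ :=
  ⨆ x : V, ∫⁻ ω, ((cluster E ω x).encard : ℝ≥0∞) ∂(P r)

/-- The `θ`-critical surface. -/
noncomputable def qTheta (E : Fin N → Set (Sym2 V)) (P : (Fin N → ℝ) → Measure (Config V))
    (p : Fin (N - 1) → ℝ) : ℝ :=
  sInf (insert (1 : ℝ) {q | q ∈ Icc (0 : ℝ) 1 ∧ 0 < theta E P (pFull N p q)})

/-- The `χ`-critical surface. -/
noncomputable def qChi (E : Fin N → Set (Sym2 V)) (P : (Fin N → ℝ) → Measure (Config V))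
    (p : Fin (N - 1) → ℝ) : ℝ :=
  sInf (insert (1 : ℝ) {q | q ∈ Icc (0 : ℝ) 1 ∧ chi E P (pFull N p q) = ⊤})

/-- `ψ_{p,q}(x,S) = Σᵢ pᵢ Σ_{{y,z} ∈ ΔS ∩ Eᵢ} P(x ↔_S y)` (each boundary edge
is enumerated by its unique orientation `y ∈ S`, `z ∉ S`). -/
noncomputable def psi (E : Fin N → Set (Sym2 V)) (P : (Fin N → ℝ) → Measure (Config V))
    (r : Fin N → ℝ) (x : V) (S : Finset V) : ℝ≥0∞ :=
  ∑ i : Fin N, ENNReal.ofReal (r i) *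
    ∑ y ∈ S, ∑' z : V,
      (if z ∉ S ∧ s(y, z) ∈ E i then P r {ω | ConnIn E ω ↑S x y} else 0)

/-- The `ψ`-critical surface. -/
noncomputable def qPsi (E : Fin N → Set (Sym2 V)) (P : (Fin N → ℝ) → Measure (Config V))
    (p : Fin (N - 1) → ℝ) : ℝ :=
  sSup {q | q ∈ Icc (0 : ℝ) 1 ∧
    ∀ x : V, ∃ S : Finset V, x ∈ S ∧ psi E P (pFull N p q) x S < 1}

/-- The event that `x` is joined by an open path to `∂Λ_k^x` (the set of vertices
at graph distance exactly `k` from `x`). -/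
def ConnSphere (E : Fin N → Set (Sym2 V)) (ω : Config V) (x : V) (k : ℕ) : Prop :=
  ∃ y : V, dist E x y = k ∧ ConnIn E ω Set.univ x y
end InhomPerc

/-!
Explore the open cluster `C` of `x` inside `S`. A path from `x` to `u ∉ S` inside `A` leaves `C`
for the last time through an open edge `{y, z}` with `y ∈ C`, `z ∉ S`, and afterwards stays in
`A \ C`. For fixed `C`, the events `{cluster of x in S = C}`, `{yz open}` and `{z ↔_{A \ C} u}` are
determined by pairwise disjoint finite sets of edges (the edges of `S` touching `C`, the edge `yz`,
the edges inside `A \ C`), hence are independent under the product measure. Summing over the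
clusters `C ∋ y` gives at most `P(x ↔_S y)`, and `P(z ↔_{A \ C} u) ≤ P(z ↔_A u)`.
-/

open ProbabilityTheory

section ProductMeasure

variable {ι β : Type*}

lemma Finset.restrict_preimage_singleton (F : Finset ι) (σ : ι → β) :
    F.restrict ⁻¹' ({F.restrict σ} : Set (F → β)) = {ω | ∀ e ∈ F, ω e = σ e} := by
  ext ω
  simp [funext_iff]

lemma Finset.exists_restrict_eq_and_restrict_eq [Nonempty β] {F₁ F₂ : Finset ι}
    (hF : Disjoint F₁ F₂) (τ₁ : F₁ → β) (τ₂ : F₂ → β) :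
    ∃ σ : ι → β, F₁.restrict σ = τ₁ ∧ F₂.restrict σ = τ₂ := by
  refine ⟨fun e => if h : e ∈ F₁ then τ₁ ⟨e, h⟩ else if h : e ∈ F₂ then τ₂ ⟨e, h⟩
    else Classical.arbitrary β, ?_, ?_⟩ <;> ext ⟨e, he⟩
  · simp [he]
  · simp [he, Finset.disjoint_right.mp hF he]

lemma dependsOn_mem_of_imp {T : Set (ι → β)} {s : Set ι}
    (h : ∀ ω ω', (∀ i ∈ s, ω i = ω' i) → ω ∈ T → ω' ∈ T) : DependsOn (· ∈ T) s :=
  fun ω ω' hag => propext ⟨h ω ω' hag, h ω' ω fun i hi => (hag i hi).symm⟩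

lemma DependsOn.mem_inter {T₁ T₂ : Set (ι → β)} {s₁ s₂ : Set ι} (h₁ : DependsOn (· ∈ T₁) s₁)
    (h₂ : DependsOn (· ∈ T₂) s₂) : DependsOn (· ∈ T₁ ∩ T₂) (s₁ ∪ s₂) := fun _ _ hag =>
  congrArg₂ (· ∧ ·) (h₁.mono Set.subset_union_left hag) (h₂.mono Set.subset_union_right hag)

lemma DependsOn.eq_restrict_preimage {T : Set (ι → β)} {F : Finset ι}
    (h : DependsOn (· ∈ T) F) : T = F.restrict ⁻¹' (F.restrict '' T) := by
  refine (Set.subset_preimage_image _ _).antisymm ?_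
  rintro ω ⟨ω', hω', hres⟩
  have : (ω' ∈ T) = (ω ∈ T) := h fun e he => congrFun hres ⟨e, he⟩
  exact this ▸ hω'

variable [Finite β] [MeasurableSpace β] [MeasurableSingletonClass β] {μ : Measure (ι → β)}

lemma DependsOn.measurableSet {T : Set (ι → β)} {F : Finset ι} (h : DependsOn (· ∈ T) F) :
    MeasurableSet T := by
  rw [h.eq_restrict_preimage]
  exact F.measurable_restrict (Set.toFinite _).measurableSet

lemma indepFun_restrict_of_measure_cylinder [Nonempty β] [IsProbabilityMeasure μ]
    (w : ι → β → ℝ≥0∞)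
    (hcyl : ∀ (F : Finset ι) (σ : ι → β), μ {ω | ∀ e ∈ F, ω e = σ e} = ∏ e ∈ F, w e (σ e))
    {F₁ F₂ : Finset ι} (hF : Disjoint F₁ F₂) :
    IndepFun F₁.restrict F₂.restrict μ := by
  have h₁ := F₁.measurable_restrict (X := fun _ => β)
  have h₂ := F₂.measurable_restrict (X := fun _ => β)
  rw [indepFun_iff_map_prod_eq_prod_map_map h₁.aemeasurable h₂.aemeasurable]
  refine Measure.ext_of_singleton fun ⟨τ₁, τ₂⟩ => ?_
  obtain ⟨σ, rfl, rfl⟩ := Finset.exists_restrict_eq_and_restrict_eq hF τ₁ τ₂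
  have hunion : {ω : ι → β | ∀ e ∈ F₁ ∪ F₂, ω e = σ e} =
      {ω | ∀ e ∈ F₁, ω e = σ e} ∩ {ω | ∀ e ∈ F₂, ω e = σ e} := by
    ext ω
    simp only [Finset.forall_mem_union, Set.mem_inter_iff, Set.mem_ofPred_eq]
  rw [← Set.singleton_prod_singleton, Measure.prod_prod, Measure.map_apply (h₁.prodMk h₂)
      ((Set.singleton_prod_singleton ..).symm ▸ measurableSet_singleton _),
    Measure.map_apply h₁ (measurableSet_singleton _), Measure.map_apply h₂ (measurableSet_singleton _),
    Set.mk_preimage_prod, Finset.restrict_preimage_singleton, Finset.restrict_preimage_singleton,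
    ← hunion, hcyl, hcyl, hcyl, Finset.prod_union hF]

lemma measure_inter_eq_mul_of_dependsOn [Nonempty β] [IsProbabilityMeasure μ]
    (w : ι → β → ℝ≥0∞)
    (hcyl : ∀ (F : Finset ι) (σ : ι → β), μ {ω | ∀ e ∈ F, ω e = σ e} = ∏ e ∈ F, w e (σ e))
    {T₁ T₂ : Set (ι → β)} {F₁ F₂ : Finset ι} (h₁ : DependsOn (· ∈ T₁) F₁)
    (h₂ : DependsOn (· ∈ T₂) F₂) (hF : Disjoint F₁ F₂) :
    μ (T₁ ∩ T₂) = μ T₁ * μ T₂ := by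
  rw [h₁.eq_restrict_preimage, h₂.eq_restrict_preimage]
  exact (indepFun_restrict_of_measure_cylinder w hcyl hF).measure_inter_preimage_eq_mul _ _
    (Set.toFinite _).measurableSet (Set.toFinite _).measurableSet

end ProductMeasure

namespace InhomPerc

variable {V : Type*} {N : ℕ} {E : Fin N → Set (Sym2 V)} {ω ω' : Config V}

noncomputable def clusterIn (E : Fin N → Set (Sym2 V)) (ω : Config V) (S : Finset V) (x : V) :
    Finset V :=
  S.filter (ConnIn E ω S x)

lemma ConnIn.mono {S₁ S₂ : Set V} (hS : S₁ ⊆ S₂) {a b : V} (h : ConnIn E ω S₁ a b) :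
    ConnIn E ω S₂ a b :=
  Relation.ReflTransGen.mono (fun _ _ ⟨ha, hb, he, ho⟩ => ⟨hS ha, hS hb, he, ho⟩) _ _ h

lemma dependsOn_connIn (B : Finset V) (a b : V) :
    DependsOn (· ∈ {ω : Config V | ConnIn E ω B a b}) B.sym2 := by
  refine dependsOn_mem_of_imp fun ω ω' hag h => ?_
  induction h with
  | refl => exact .refl
  | tail _ hstep ih =>
    obtain ⟨hc, hd, he, ho⟩ := hstep
    exact ih.tail ⟨hc, hd, he, hag _ (Finset.mk_mem_sym2_iff.mpr ⟨hc, hd⟩) ▸ ho⟩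

lemma connIn_iff_of_forall_connIn {S : Finset V} {x v : V}
    (h : ∀ e ∈ S.sym2, (∃ w ∈ e, ConnIn E ω S x w) → ω e = ω' e) :
    ConnIn E ω S x v ↔ ConnIn E ω' S x v := by
  constructor
  · intro hv
    induction hv with
    | refl => exact .refl
    | tail hxw hstep ih =>
      obtain ⟨hc, hd, he, ho⟩ := hstep
      refine ih.tail ⟨hc, hd, he, ?_⟩
      rwa [← h _ (Finset.mk_mem_sym2_iff.mpr ⟨hc, hd⟩) ⟨_, Sym2.mem_mk_left _ _, hxw⟩]
  · intro hv
    induction hv with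
    | refl => exact .refl
    | tail _ hstep ih =>
      obtain ⟨hc, hd, he, ho⟩ := hstep
      refine ih.tail ⟨hc, hd, he, ?_⟩
      rwa [h _ (Finset.mk_mem_sym2_iff.mpr ⟨hc, hd⟩) ⟨_, Sym2.mem_mk_left _ _, ih⟩]

lemma dependsOn_clusterIn_eq (S : Finset V) (x : V) (C : Finset V) :
    DependsOn (· ∈ (clusterIn E · S x) ⁻¹' {C}) (S.sym2.filter fun e => ∃ v ∈ e, v ∈ C) := by
  refine dependsOn_mem_of_imp fun ω ω' hag (hC : clusterIn E ω S x = C) => ?_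
  show clusterIn E ω' S x = C
  rw [← hC]
  refine (Finset.filter_congr fun v _ => connIn_iff_of_forall_connIn ?_).symm
  rintro e he ⟨w, hwe, hw⟩
  refine hag e (Finset.mem_filter.mpr ⟨he, w, hwe, ?_⟩)
  rw [← hC]
  exact Finset.mem_filter.mpr ⟨Finset.mem_sym2_iff.mp he w hwe, hw⟩

lemma sum_measure_clusterIn_eq_le (μ : Measure (Config V)) (S : Finset V) (x y : V) :
    ∑ C ∈ S.powerset.filter (y ∈ ·), μ ((clusterIn E · S x) ⁻¹' {C}) ≤
      μ {ω | ConnIn E ω S x y} := by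
  rw [sum_measure_preimage_singleton _ fun C _ => (dependsOn_clusterIn_eq S x C).measurableSet]
  exact measure_mono fun ω hω => (Finset.mem_filter.mp (Finset.mem_filter.mp hω).2).2

lemma exists_exit_of_connIn {S A : Finset V} {x u : V} (hxS : x ∈ S) (huS : u ∉ S)
    (h : ConnIn E ω A x u) :
    ∃ y ∈ clusterIn E ω S x, ∃ z ∉ S, s(y, z) ∈ Eset E ∧ ω s(y, z) = true ∧
      ConnIn E ω ↑(A \ clusterIn E ω S x) z u := by
  set C := clusterIn E ω S x
  have hxC : x ∈ C := Finset.mem_filter.mpr ⟨hxS, .refl⟩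
  suffices H : ∀ v, ConnIn E ω A x v → v ∉ C →
      ∃ y ∈ C, ∃ z ∉ S, s(y, z) ∈ Eset E ∧ ω s(y, z) = true ∧ ConnIn E ω ↑(A \ C) z v from
    H u h fun hu => huS (Finset.mem_filter.mp hu).1
  intro v hv
  induction hv with
  | refl => exact absurd hxC
  | @tail w v _ hstep ih =>
    intro hvC
    obtain ⟨hwA, hvA, he, ho⟩ := hstep
    by_cases hwC : w ∈ C
    · refine ⟨w, hwC, v, fun hvS => hvC ?_, he, ho, .refl⟩
      obtain ⟨hwS, hxw⟩ := Finset.mem_filter.mp hwC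
      exact Finset.mem_filter.mpr ⟨hvS, hxw.tail ⟨hwS, hvS, he, ho⟩⟩
    · obtain ⟨y, hy, z, hz, he', ho', hzw⟩ := ih hwC
      exact ⟨y, hy, z, hz, he', ho',
        hzw.tail ⟨Finset.mem_sdiff.mpr ⟨hwA, hwC⟩, Finset.mem_sdiff.mpr ⟨hvA, hvC⟩, he, ho⟩⟩

def exitEvent (E : Fin N → Set (Sym2 V)) (S A : Finset V) (x u : V) (i : Fin N) (y z : V) :
    Set (Config V) :=
  {ω | y ∈ clusterIn E ω S x ∧ z ∉ S ∧ s(y, z) ∈ E i ∧ ω s(y, z) = true ∧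
    ConnIn E ω ↑(A \ clusterIn E ω S x) z u}

lemma connIn_subset_iUnion_exitEvent {S A : Finset V} {x u : V} (hxS : x ∈ S) (huS : u ∉ S) :
    {ω | ConnIn E ω A x u} ⊆ ⋃ i, ⋃ y ∈ S, ⋃ z, exitEvent E S A x u i y z := by
  intro ω hω
  obtain ⟨y, hy, z, hz, he, ho, hzu⟩ := exists_exit_of_connIn hxS huS hω
  obtain ⟨i, hi⟩ := Set.mem_iUnion.mp he
  simp only [Set.mem_iUnion]
  exact ⟨i, y, (Finset.mem_filter.mp hy).1, z, hy, hz, hi, ho, hzu⟩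

lemma exitEvent_subset_biUnion {S A : Finset V} {x u : V} {i : Fin N} {y z : V} :
    exitEvent E S A x u i y z ⊆ ⋃ C ∈ S.powerset.filter (y ∈ ·),
      (clusterIn E · S x) ⁻¹' {C} ∩ ({ω | ω s(y, z) = true} ∩ {ω | ConnIn E ω ↑(A \ C) z u}) :=
  fun _ ⟨hy, _, _, ho, hzu⟩ => Set.mem_biUnion
    (Finset.mem_filter.mpr ⟨Finset.mem_powerset.mpr (Finset.filter_subset _ _), hy⟩) ⟨rfl, ho, hzu⟩

lemma pFull_mem_Icc {p : Fin (N - 1) → ℝ} (hp : ∀ i, p i ∈ Icc (0 : ℝ) 1) {q : ℝ}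
    (hq : q ∈ Icc (0 : ℝ) 1) (i : Fin N) : pFull N p q i ∈ Icc (0 : ℝ) 1 := by
  unfold pFull
  split
  exacts [hp _, hq]

lemma edgeProb_eq_of_mem (hdisj : DisjointColours E) (r : Fin N → ℝ) {e : Sym2 V} {i : Fin N}
    (he : e ∈ E i) : edgeProb E r e = r i := by
  rw [edgeProb, Finset.sum_eq_single_of_mem i (Finset.mem_univ i) fun j _ hj =>
    if_neg fun hj' => Set.disjoint_left.mp (hdisj j i hj) hj' he, if_pos he]

section PercolationMeasure

variable {P : (Fin N → ℝ) → Measure (Config V)} {r : Fin N → ℝ}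

lemma IsPercFamily.measure_inter_eq_mul (hP : IsPercFamily E P) (hr : ∀ i, r i ∈ Icc (0 : ℝ) 1)
    {T₁ T₂ : Set (Config V)} {F₁ F₂ : Finset (Sym2 V)} (h₁ : DependsOn (· ∈ T₁) F₁)
    (h₂ : DependsOn (· ∈ T₂) F₂) (hF : Disjoint F₁ F₂) :
    P r (T₁ ∩ T₂) = P r T₁ * P r T₂ :=
  have := (hP r hr).1
  measure_inter_eq_mul_of_dependsOn
    (fun e b => ENNReal.ofReal (if b then edgeProb E r e else 1 - edgeProb E r e)) (hP r hr).2
    h₁ h₂ hF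

lemma IsPercFamily.measure_open (hP : IsPercFamily E P) (hr : ∀ i, r i ∈ Icc (0 : ℝ) 1)
    (hdisj : DisjointColours E) {e : Sym2 V} {i : Fin N} (he : e ∈ E i) :
    P r {ω | ω e = true} = ENNReal.ofReal (r i) := by
  have h := (hP r hr).2 {e} fun _ => true
  simp only [Finset.mem_singleton, forall_eq, Finset.prod_singleton, if_true] at h
  rw [h, edgeProb_eq_of_mem hdisj r he]

lemma IsPercFamily.measure_clusterIn_inter_open_inter_connIn (hP : IsPercFamily E P)
    (hr : ∀ i, r i ∈ Icc (0 : ℝ) 1) (hdisj : DisjointColours E) {S A C : Finset V} {x y z u : V}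
    {i : Fin N} (hyC : y ∈ C) (hzS : z ∉ S) (hi : s(y, z) ∈ E i) :
    P r ((clusterIn E · S x) ⁻¹' {C} ∩ ({ω | ω s(y, z) = true} ∩ {ω | ConnIn E ω ↑(A \ C) z u}))
      = P r ((clusterIn E · S x) ⁻¹' {C}) *
        (ENNReal.ofReal (r i) * P r {ω | ConnIn E ω ↑(A \ C) z u}) := by
  have hO : DependsOn (· ∈ {ω : Config V | ω s(y, z) = true}) ({s(y, z)} : Finset (Sym2 V)) :=
    dependsOn_mem_of_imp fun ω ω' hag (h : ω s(y, z) = true) =>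
      (hag _ (Finset.mem_singleton_self _)).symm.trans h
  have hL := dependsOn_connIn (E := E) (A \ C) z u
  have hOL : Disjoint {s(y, z)} (A \ C).sym2 := by
    rw [Finset.disjoint_singleton_left, Finset.mk_mem_sym2_iff, Finset.mem_sdiff]
    exact fun h => h.1.2 hyC
  have hCOL : Disjoint (S.sym2.filter fun e => ∃ v ∈ e, v ∈ C) ({s(y, z)} ∪ (A \ C).sym2) := by
    refine Finset.disjoint_left.mpr fun e he he' => ?_
    obtain ⟨heS, v, hve, hvC⟩ := Finset.mem_filter.mp he
    rcases Finset.mem_union.mp he' with heO | heL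
    · rw [Finset.mem_singleton.mp heO] at heS
      exact hzS (Finset.mk_mem_sym2_iff.mp heS).2
    · exact (Finset.mem_sdiff.mp (Finset.mem_sym2_iff.mp heL v hve)).2 hvC
  rw [hP.measure_inter_eq_mul hr (dependsOn_clusterIn_eq S x C)
      (by rw [Finset.coe_union]; exact hO.mem_inter hL) hCOL,
    hP.measure_inter_eq_mul hr hO hL hOL, hP.measure_open hr hdisj hi]

lemma IsPercFamily.measure_exitEvent_le (hP : IsPercFamily E P) (hr : ∀ i, r i ∈ Icc (0 : ℝ) 1)
    (hdisj : DisjointColours E) (S A : Finset V) (x u : V) (i : Fin N) (y z : V) :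
    P r (exitEvent E S A x u i y z) ≤
      if z ∉ S ∧ s(y, z) ∈ E i then
        ENNReal.ofReal (r i) * P r {ω | ConnIn E ω ↑S x y} * P r {ω | ConnIn E ω ↑A z u}
      else 0 := by
  split_ifs with hyz
  swap
  · have : exitEvent E S A x u i y z = ∅ :=
      Set.eq_empty_of_forall_notMem fun ω hω => hyz ⟨hω.2.1, hω.2.2.1⟩
    simp [this]
  obtain ⟨hzS, hi⟩ := hyz
  calc P r (exitEvent E S A x u i y z)
      ≤ ∑ C ∈ S.powerset.filter (y ∈ ·), P r ((clusterIn E · S x) ⁻¹' {C} ∩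
          ({ω | ω s(y, z) = true} ∩ {ω | ConnIn E ω ↑(A \ C) z u})) :=
        (measure_mono exitEvent_subset_biUnion).trans (measure_biUnion_finset_le _ _)
    _ = ∑ C ∈ S.powerset.filter (y ∈ ·), P r ((clusterIn E · S x) ⁻¹' {C}) *
          (ENNReal.ofReal (r i) * P r {ω | ConnIn E ω ↑(A \ C) z u}) :=
        Finset.sum_congr rfl fun C hC => hP.measure_clusterIn_inter_open_inter_connIn hr hdisj
          (Finset.mem_filter.mp hC).2 hzS hi
    _ ≤ ∑ C ∈ S.powerset.filter (y ∈ ·), P r ((clusterIn E · S x) ⁻¹' {C}) *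
          (ENNReal.ofReal (r i) * P r {ω | ConnIn E ω ↑A z u}) := by
        gcongr with C _ ω
        exact ConnIn.mono (Finset.coe_subset.mpr Finset.sdiff_subset)
    _ ≤ P r {ω | ConnIn E ω ↑S x y} * (ENNReal.ofReal (r i) * P r {ω | ConnIn E ω ↑A z u}) := by
        rw [← Finset.sum_mul]
        gcongr
        exact sum_measure_clusterIn_eq_le _ S x y
    _ = _ := by ring

end PercolationMeasure

theorem bk_boundary_bound_general
    {V : Type*} [Countable V] {N : ℕ}
    (E : Fin N → Set (Sym2 V))
    (hdisj : DisjointColours E)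
    (P : (Fin N → ℝ) → Measure (Config V)) (hP : IsPercFamily E P)
    (p : Fin (N - 1) → ℝ) (hp : ∀ i, p i ∈ Icc (0 : ℝ) 1)
    (q : ℝ) (hq : q ∈ Icc (0 : ℝ) 1)
    (x : V) (S : Finset V) (hxS : x ∈ S)
    (A : Finset V) (u : V) (huS : u ∉ S) :
    P (pFull N p q) {ω | ConnIn E ω ↑A x u} ≤
      ∑ i : Fin N, ∑ y ∈ S, ∑' z : V,
        (if z ∉ S ∧ s(y, z) ∈ E i then
          ENNReal.ofReal (pFull N p q i) * P (pFull N p q) {ω | ConnIn E ω ↑S x y} *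
            P (pFull N p q) {ω | ConnIn E ω ↑A z u}
        else 0) := by
  have hr := pFull_mem_Icc hp hq
  calc P (pFull N p q) {ω | ConnIn E ω ↑A x u}
      ≤ P (pFull N p q) (⋃ i, ⋃ y ∈ S, ⋃ z, exitEvent E S A x u i y z) :=
        measure_mono (connIn_subset_iUnion_exitEvent hxS huS)
    _ ≤ ∑ i : Fin N, ∑ y ∈ S, ∑' z : V, P (pFull N p q) (exitEvent E S A x u i y z) := by
        refine (measure_iUnion_fintype_le _ _).trans (Finset.sum_le_sum fun i _ => ?_)
        refine (measure_biUnion_finset_le _ _).trans (Finset.sum_le_sum fun y _ => ?_)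
        exact measure_iUnion_le _
    _ ≤ _ := by
        gcongr with i _ y _ z
        exact hP.measure_exitEvent_le hr hdisj S A x u i y z

/-- the BK-type bound
`P(x ↔_A u) ≤ Σᵢ Σ_{ {y,z} ∈ ΔS ∩ Eᵢ } pᵢ P(x ↔_S y) P(z ↔_A u)` for `u ∈ A \\ S`. -/
theorem bk_boundary_bound
    {V : Type*} [Countable V] [Infinite V] {N : ℕ} (hN : 0 < N)
    (E : Fin N → Set (Sym2 V))
    (hdisj : DisjointColours E) (hloops : NoLoops E)
    (hlf : LocFin E) (hconn : ConnectedGraph E)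
    (P : (Fin N → ℝ) → Measure (Config V)) (hP : IsPercFamily E P)
    (p : Fin (N - 1) → ℝ) (hp : ∀ i, p i ∈ Icc (0 : ℝ) 1)
    (q : ℝ) (hq : q ∈ Icc (0 : ℝ) 1)
    (x : V) (S : Finset V) (hxS : x ∈ S)
    (A : Finset V) (u : V) (huA : u ∈ A) (huS : u ∉ S) :
    P (pFull N p q) {ω | ConnIn E ω ↑A x u} ≤
      ∑ i : Fin N, ∑ y ∈ S, ∑' z : V,
        (if z ∉ S ∧ s(y, z) ∈ E i then
          ENNReal.ofReal (pFull N p q i) * P (pFull N p q) {ω | ConnIn E ω ↑S x y} *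
            P (pFull N p q) {ω | ConnIn E ω ↑A z u}
        else 0) :=
  bk_boundary_bound_general E hdisj P hP p hp q hq x S hxS A u huS

end InhomPerc
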